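/- arXiv:0908.1858 — 4 statements merged into one kernel-verified Lean document; each statement's English description precedes it below -/
import Mathlib

section
/- Let H be a self-adjoint operator on a Hilbert space with simple isolated lowest eigenvalue E, spectral gap g > 0 (i.e., spec(H) ∩ (E, E+g) = ∅), and normalized ground state Φ. Let ψ be orthogonal to Φ. Then for any z with |z - E| = μ where 0 < μ < g/3, one has ⟨ψ, |H - z|⁻¹ ψ⟩ ≤ C |⟨ψ, (H - z)⁻¹ ψ⟩| for a constant C depending only on μ/g (e.g., C = (g + μ)/(g - μ) works). -/
/-!
Write `ψ = (H - z) φ` with `φ = R ψ`. Then `Re ⟪ψ, R ψ⟫ = ⟪φ, (H - Re z) φ⟫` and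
`⟪ψ, B ψ⟫ = ⟪φ, |H - z| φ⟫`, and `φ` is again orthogonal to the ground state. Above the gap,
`|x - z| ≤ (g + μ)/(g - μ) · (x - Re z)` by the triangle inequality, so the function
`(g + μ)/(g - μ) · (x - Re z) - |x - z|` is nonnegative on the spectrum except possibly at the
isolated point `E`; the contribution of `E` is carried by the ground-state eigenspace, which `φ`
does not see.
-/

open scoped InnerProductSpace

theorem norm_ofReal_sub_le_mul_sub_re {E g μ x : ℝ} {z : ℂ} (hμg : μ < g)
    (hz : ‖z - E‖ ≤ μ) (hx : E + g ≤ x) :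
    ‖(x : ℂ) - z‖ ≤ (g + μ) / (g - μ) * (x - z.re) := by
  have hμ : 0 ≤ μ := (norm_nonneg _).trans hz
  have hnorm : ‖(x : ℂ) - z‖ ≤ x - E + μ := by
    calc ‖(x : ℂ) - z‖ ≤ ‖(x : ℂ) - E‖ + ‖(E : ℂ) - z‖ := norm_sub_le_norm_sub_add_norm_sub _ _ _
      _ ≤ x - E + μ := by
        rw [← Complex.ofReal_sub, Complex.norm_real, Real.norm_of_nonneg (by linarith),
          norm_sub_rev]
        linarith
  have hre : x - E - μ ≤ x - z.re := by
    have := (abs_le.mp ((Complex.abs_re_le_norm (z - E)).trans hz)).2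
    simp only [Complex.sub_re, Complex.ofReal_re] at this
    linarith
  calc ‖(x : ℂ) - z‖ ≤ x - E + μ := hnorm
    _ ≤ (g + μ) / (g - μ) * (x - E - μ) := by
        rw [div_mul_eq_mul_div, le_div_iff₀ (by linarith)]
        nlinarith
    _ ≤ (g + μ) / (g - μ) * (x - z.re) :=
        mul_le_mul_of_nonneg_left hre (div_nonneg (by linarith) (by linarith))

theorem re_inner_sub_smul_one_apply_self {F : Type*} [NormedAddCommGroup F]
    [InnerProductSpace ℂ F] (T : F →L[ℂ] F) (z : ℂ) (φ : F) :
    (⟪(T - z • 1) φ, φ⟫_ℂ).re = (⟪φ, (T - z.re • 1) φ⟫_ℂ).re := by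
  have h : (⟪T φ, φ⟫_ℂ).re = (⟪φ, T φ⟫_ℂ).re := by
    rw [← inner_conj_symm, Complex.conj_re]
  simp [h, ← Complex.ofReal_pow, mul_comm]

section

variable {F : Type*} [NormedAddCommGroup F] [InnerProductSpace ℂ F] [CompleteSpace F]

theorem IsSelfAdjoint.inner_eq_zero_of_inner_sub_smul_one_apply {H : F →L[ℂ] F}
    (hH : IsSelfAdjoint H) {E : ℝ} {z : ℂ} (hzE : (E : ℂ) ≠ z) {v φ : F}
    (hv : H v = (E : ℂ) • v) (h : ⟪v, (H - z • 1) φ⟫_ℂ = 0) : ⟪v, φ⟫_ℂ = 0 := by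
  have hEz : ⟪v, (H - z • 1) φ⟫_ℂ = (E - z) * ⟪v, φ⟫_ℂ := by
    rw [← ContinuousLinearMap.adjoint_inner_left, ← ContinuousLinearMap.star_eq_adjoint]
    simp [star_sub, star_smul, hH.star_eq, hv, inner_sub_left, inner_smul_left, sub_mul,
      -Complex.coe_smul]
  rw [hEz, mul_eq_zero] at h
  exact h.resolve_left (sub_ne_zero.mpr hzE)

theorem cfc_norm_ofReal_sub_sq {H : F →L[ℂ] F} (hH : IsSelfAdjoint H) (z : ℂ) :
    cfc (fun x : ℝ => ‖(x : ℂ) - z‖ ^ 2) H = (H - starRingEnd ℂ z • 1) * (H - z • 1) := by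
  have hq : (fun x : ℝ => ‖(x : ℂ) - z‖ ^ 2) = fun x => x ^ 2 - 2 * z.re * x + ‖z‖ ^ 2 := by
    ext x
    simp only [Complex.sq_norm, Complex.normSq_apply, Complex.sub_re, Complex.sub_im,
      Complex.ofReal_re, Complex.ofReal_im]
    ring
  have hre : ((2 * z.re : ℝ) : ℂ) = z + starRingEnd ℂ z := (Complex.add_conj z).symm
  have hnorm : ((‖z‖ ^ 2 : ℝ) : ℂ) = starRingEnd ℂ z * z := by
    rw [mul_comm, Complex.mul_conj, Complex.normSq_eq_norm_sq]
  rw [hq, cfc_add .., cfc_sub .., cfc_pow_id H 2, cfc_const_mul_id (2 * z.re) H, cfc_const _ H,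
    Algebra.algebraMap_eq_smul_one, ← Complex.coe_smul, ← Complex.coe_smul, hre, hnorm]
  simp only [mul_sub, sub_mul, mul_smul_comm, smul_mul_assoc, one_mul, mul_one, sq]
  module

theorem continuousOn_norm_ofReal_sub_inv {s : Set ℝ} {z : ℂ} (hz : ∀ x ∈ s, (x : ℂ) ≠ z) :
    ContinuousOn (fun x : ℝ => ‖(x : ℂ) - z‖⁻¹) s :=
  (by fun_prop : Continuous fun x : ℝ => ‖(x : ℂ) - z‖).continuousOn.inv₀ fun x hx =>
    norm_ne_zero_iff.mpr (sub_ne_zero.mpr (hz x hx))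

theorem eq_cfc_norm_ofReal_sub_inv {H B : F →L[ℂ] F} (hH : IsSelfAdjoint H) {z : ℂ}
    (hz : ∀ x ∈ spectrum ℝ H, (x : ℂ) ≠ z) (hB : B.IsPositive)
    (hBB : B * B * ((H - starRingEnd ℂ z • 1) * (H - z • 1)) = 1) :
    B = cfc (fun x : ℝ => ‖(x : ℂ) - z‖⁻¹) H := by
  set b := fun x : ℝ => ‖(x : ℂ) - z‖⁻¹
  have hb : ContinuousOn b (spectrum ℝ H) := continuousOn_norm_ofReal_sub_inv hz
  have hinv : (H - starRingEnd ℂ z • 1) * (H - z • 1) * cfc (fun x => b x * b x) H = 1 := by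
    rw [← cfc_norm_ofReal_sub_sq hH, ← cfc_mul .., ← cfc_one ℝ H]
    refine cfc_congr fun x hx => ?_
    have : ‖(x : ℂ) - z‖ ≠ 0 := norm_ne_zero_iff.mpr (sub_ne_zero.mpr (hz x hx))
    simp only [b, Pi.one_apply]
    field_simp
  have hsq : cfc b H * cfc b H = B * B := by
    calc cfc b H * cfc b H = B * B * ((H - starRingEnd ℂ z • 1) * (H - z • 1)) *
          cfc (fun x => b x * b x) H := by rw [hBB, one_mul, cfc_mul b b H]
      _ = B * B := by rw [mul_assoc, hinv, mul_one]
  have hB0 : 0 ≤ B := (ContinuousLinearMap.nonneg_iff_isPositive B).mpr hB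
  calc B = CFC.sqrt (B * B) := (CFC.sqrt_mul_self B).symm
    _ = cfc b H := CFC.sqrt_unique hsq (cfc_nonneg fun x _ => by positivity)

theorem sub_smul_one_mul_cfc_norm_inv_mul {H : F →L[ℂ] F} (hH : IsSelfAdjoint H) {z : ℂ}
    (hz : ∀ x ∈ spectrum ℝ H, (x : ℂ) ≠ z) :
    (H - starRingEnd ℂ z • 1) * cfc (fun x : ℝ => ‖(x : ℂ) - z‖⁻¹) H * (H - z • 1) =
      cfc (fun x : ℝ => ‖(x : ℂ) - z‖) H := by
  have hcomm : Commute (cfc (fun x : ℝ => ‖(x : ℂ) - z‖⁻¹) H) H := by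
    simpa only [cfc_id ℝ H] using cfc_commute_cfc (fun x : ℝ => ‖(x : ℂ) - z‖⁻¹) id H
  rw [(hcomm.sub_right ((Commute.one_right _).smul_right _)).symm.eq, mul_assoc,
    ← cfc_norm_ofReal_sub_sq hH, ← cfc_mul _ _ H (continuousOn_norm_ofReal_sub_inv hz)]
  refine cfc_congr fun x hx => ?_
  have : ‖(x : ℂ) - z‖ ≠ 0 := norm_ne_zero_iff.mpr (sub_ne_zero.mpr (hz x hx))
  field_simp

theorem inner_sub_smul_one_apply_eq_inner_cfc_norm {H B : F →L[ℂ] F} (hH : IsSelfAdjoint H)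
    {z : ℂ} (hz : ∀ x ∈ spectrum ℝ H, (x : ℂ) ≠ z) (hB : B.IsPositive)
    (hBB : B * B * ((H - starRingEnd ℂ z • 1) * (H - z • 1)) = 1) (φ : F) :
    ⟪(H - z • 1) φ, B ((H - z • 1) φ)⟫_ℂ = ⟪φ, cfc (fun x : ℝ => ‖(x : ℂ) - z‖) H φ⟫_ℂ := by
  have hstar : star (H - z • 1) = H - starRingEnd ℂ z • 1 := by
    simp [star_sub, star_smul, hH.star_eq]
  rw [← ContinuousLinearMap.adjoint_inner_right, ← ContinuousLinearMap.star_eq_adjoint, hstar,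
    ← sub_smul_one_mul_cfc_norm_inv_mul hH hz, ← eq_cfc_norm_ofReal_sub_inv hH hz hB hBB]
  rfl

theorem re_inner_cfc_nonneg_of_isolated {H : F →L[ℂ] F} (hH : IsSelfAdjoint H) {E g : ℝ}
    (hg : 0 < g) (hgap : ∀ x ∈ spectrum ℝ H, x ≠ E → g ≤ |x - E|) {f : ℝ → ℝ}
    (hf : ContinuousOn f (spectrum ℝ H)) (hf0 : ∀ x ∈ spectrum ℝ H, x ≠ E → 0 ≤ f x) {φ : F}
    (hφ : ∀ v, H v = (E : ℂ) • v → ⟪v, φ⟫_ℂ = 0) :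
    0 ≤ (⟪φ, cfc f H φ⟫_ℂ).re := by
  -- `cfc σ H` plays the role of the spectral projection onto the `E`-eigenspace.
  set σ : ℝ → ℝ := fun x => max 0 (1 - |x - E| / g)
  have hσE : σ E = 1 := by simp [σ]
  have hσ : ∀ x ∈ spectrum ℝ H, x ≠ E → σ x = 0 := fun x hx hxE =>
    max_eq_left (by linarith [(le_div_iff₀ hg).mpr (one_mul g ▸ hgap x hx hxE)])
  have hsplit : cfc f H = cfc (fun x => f x * (1 - σ x)) H + f E • cfc σ H := by
    rw [← cfc_const_mul (f E) σ H, ← cfc_add (a := H) (fun x => f x * (1 - σ x))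
      (fun x => f E * σ x) (hf.mul (by fun_prop))]
    refine cfc_congr fun x hx => ?_
    rcases eq_or_ne x E with rfl | hxE
    · simp [hσE]
    · simp [hσ x hx hxE]
  have hpos : 0 ≤ cfc (fun x => f x * (1 - σ x)) H := by
    refine cfc_nonneg fun x hx => ?_
    rcases eq_or_ne x E with rfl | hxE
    · simp [hσE]
    · simpa [hσ x hx hxE] using hf0 x hx hxE
  have heig : H (cfc σ H φ) = (E : ℂ) • cfc σ H φ := by
    have hlin : cfc (fun x => x - E) H = H - algebraMap ℝ (F →L[ℂ] F) E := by
      rw [cfc_sub (fun x : ℝ => x) (fun _ => E) H, cfc_id' ℝ H, cfc_const E H]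
    have h : (H - algebraMap ℝ (F →L[ℂ] F) E) * cfc σ H = 0 := by
      rw [← hlin, ← cfc_mul (fun x => x - E) σ H, ← cfc_zero ℝ H]
      refine cfc_congr fun x hx => ?_
      rcases eq_or_ne x E with rfl | hxE
      · simp
      · simp [hσ x hx hxE]
    have := congrArg (· φ) h
    simpa [sub_eq_zero, Algebra.algebraMap_eq_smul_one] using this
  have hφσ : ⟪φ, cfc σ H φ⟫_ℂ = 0 := by rw [← inner_conj_symm, hφ _ heig, map_zero]
  rw [hsplit, add_apply, inner_add_right, smul_apply,
    ← Complex.coe_smul, inner_smul_right, hφσ]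
  simpa using ((ContinuousLinearMap.nonneg_iff_isPositive _).mp hpos).re_inner_nonneg_right φ


theorem re_inner_cfc_norm_sub_le {H : F →L[ℂ] F} (hH : IsSelfAdjoint H) {E g μ : ℝ} {z : ℂ}
    (hg : 0 < g) (hspec : ∀ x ∈ spectrum ℝ H, x = E ∨ E + g ≤ x) (hμg : μ < g)
    (hz : ‖z - E‖ ≤ μ) {φ : F} (hφ : ∀ v, H v = (E : ℂ) • v → ⟪v, φ⟫_ℂ = 0) :
    (⟪φ, cfc (fun x : ℝ => ‖(x : ℂ) - z‖) H φ⟫_ℂ).re ≤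
      (g + μ) / (g - μ) * (⟪φ, (H - z.re • 1) φ⟫_ℂ).re := by
  have hgap : ∀ x ∈ spectrum ℝ H, x ≠ E → g ≤ |x - E| := fun x hx hxE => by
    rw [abs_of_nonneg] <;> linarith [(hspec x hx).resolve_left hxE]
  have hform := re_inner_cfc_nonneg_of_isolated hH hg hgap
    (f := fun x => (g + μ) / (g - μ) * (x - z.re) - ‖(x : ℂ) - z‖) (by fun_prop)
    (fun x hx hxE => sub_nonneg.mpr <|
      norm_ofReal_sub_le_mul_sub_re hμg hz <| (hspec x hx).resolve_left hxE) hφ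
  rw [cfc_sub .., cfc_const_mul .., cfc_sub (fun x : ℝ => x) (fun _ => z.re) H, cfc_id' ℝ H,
    cfc_const z.re H, Algebra.algebraMap_eq_smul_one, sub_apply, inner_sub_right, smul_apply,
    ← Complex.coe_smul, inner_smul_right, Complex.sub_re, Complex.re_ofReal_mul] at hform
  linarith
end

/-- `R` is the resolvent `(H - z)⁻¹` and `B` stands for `|H - z|⁻¹`. -/
theorem stmt2_general {F : Type*} [NormedAddCommGroup F] [InnerProductSpace ℂ F] [CompleteSpace F]
    (H : F →L[ℂ] F) (E g μ : ℝ) (Φ ψ : F) (z : ℂ)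
    (hH : IsSelfAdjoint H) (hg : 0 < g)
    (hsimple : ∀ v : F, H v = (E : ℂ) • v → ∃ c : ℂ, v = c • Φ)
    (hspec : ∀ w ∈ spectrum ℂ H, w = (E : ℂ) ∨ ∃ x : ℝ, w = (x : ℂ) ∧ E + g ≤ x)
    (hψ : ⟪Φ, ψ⟫_ℂ = 0)
    (hμ : 0 < μ) (hμg : μ < g / 3) (hz : ‖z - (E : ℂ)‖ = μ)
    (R : F →L[ℂ] F) (hR2 : (H - z • 1) * R = 1)
    (B : F →L[ℂ] F) (hB : B.IsPositive)
    (hBB : B * B * ((H - (starRingEnd ℂ z) • 1) * (H - z • 1)) = 1) :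
    (⟪ψ, B ψ⟫_ℂ).re ≤ (g + μ) / (g - μ) * ‖⟪ψ, R ψ⟫_ℂ‖ := by
  have hspecR : ∀ x ∈ spectrum ℝ H, x = E ∨ E + g ≤ x := fun x hx => by
    rcases hspec x (spectrum.algebraMap_mem ℂ hx) with h | ⟨y, hy, hyE⟩
    · exact Or.inl (Complex.ofReal_injective h)
    · exact Or.inr (Complex.ofReal_injective hy ▸ hyE)
  have hzE : (E : ℂ) ≠ z := fun h => by simp [h] at hz; linarith
  have hz_notMem : ∀ x ∈ spectrum ℝ H, (x : ℂ) ≠ z := fun x hx h => by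
    rcases hspecR x hx with rfl | hxE
    · exact hzE h
    · rw [← h, ← Complex.ofReal_sub, Complex.norm_real, Real.norm_of_nonneg (by linarith)] at hz
      linarith
  have hψφ : (H - z • 1) (R ψ) = ψ := by simpa using congrArg (· ψ) hR2
  have hφ : ∀ v, H v = (E : ℂ) • v → ⟪v, R ψ⟫_ℂ = 0 := fun v hv => by
    obtain ⟨c, rfl⟩ := hsimple v hv
    refine hH.inner_eq_zero_of_inner_sub_smul_one_apply hzE hv ?_
    rw [hψφ, inner_smul_left, hψ, mul_zero]
  have hB_le := re_inner_cfc_norm_sub_le hH hg hspecR (by linarith) hz.le hφ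
  rw [← inner_sub_smul_one_apply_eq_inner_cfc_norm hH hz_notMem hB hBB, hψφ,
    ← re_inner_sub_smul_one_apply_self, hψφ] at hB_le
  calc (⟪ψ, B ψ⟫_ℂ).re ≤ (g + μ) / (g - μ) * (⟪ψ, R ψ⟫_ℂ).re := hB_le
    _ ≤ (g + μ) / (g - μ) * ‖⟪ψ, R ψ⟫_ℂ‖ :=
      mul_le_mul_of_nonneg_left (Complex.re_le_norm _) (div_nonneg (by linarith) (by linarith))

/-- property (B3). For `ψ` orthogonal to the ground state `Φ` and `z` on the
circle `|z - E| = μ` with `0 < μ < g/3`, the expectation of `|H - z|⁻¹` in `ψ` is bounded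
by `C = (g+μ)/(g-μ)` times the absolute value of the expectation of `(H - z)⁻¹`.
Here `R = (H - z)⁻¹` and `B = |H - z|⁻¹` is characterized as the positive operator with
`B² = ((H - z̄)(H - z))⁻¹`. -/
theorem stmt2 {F : Type*} [NormedAddCommGroup F] [InnerProductSpace ℂ F] [CompleteSpace F]
    (H : F →L[ℂ] F) (E g μ : ℝ) (Φ ψ : F) (z : ℂ)
    (hH : IsSelfAdjoint H) (hg : 0 < g)
    (hΦ : ‖Φ‖ = 1) (heig : H Φ = (E : ℂ) • Φ)
    (hsimple : ∀ v : F, H v = (E : ℂ) • v → ∃ c : ℂ, v = c • Φ)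
    (hspec : ∀ w ∈ spectrum ℂ H, w = (E : ℂ) ∨ ∃ x : ℝ, w = (x : ℂ) ∧ E + g ≤ x)
    (hbot : ∀ w ∈ spectrum ℂ H, E ≤ w.re)
    (hψ : ⟪Φ, ψ⟫_ℂ = 0)
    (hμ : 0 < μ) (hμg : μ < g / 3) (hz : ‖z - (E : ℂ)‖ = μ)
    (R : F →L[ℂ] F) (hR1 : R * (H - z • 1) = 1) (hR2 : (H - z • 1) * R = 1)
    (B : F →L[ℂ] F) (hB : B.IsPositive)
    (hBB : B * B * ((H - (starRingEnd ℂ z) • 1) * (H - z • 1)) = 1)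
    (hBB' : ((H - (starRingEnd ℂ z) • 1) * (H - z • 1)) * (B * B) = 1) :
    (⟪ψ, B ψ⟫_ℂ).re ≤ (g + μ) / (g - μ) * ‖⟪ψ, R ψ⟫_ℂ‖ :=
  stmt2_general H E g μ Φ ψ z hH hg hsimple hspec hψ hμ hμg hz R hR2 B hB hBB
end

section
/- Let H be a self-adjoint operator with simple isolated lowest eigenvalue E, spectral gap g > 0, and normalized ground state Φ. Let ψ ⊥ Φ. Then for z with |z - E| = μ, 0 < μ < g/3, one has ⟨ψ, |H - z|⁻² ψ⟩ ≤ C |⟨ψ, (H - z)⁻² ψ⟩| for a constant C depending only on μ/g. -/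
/-!
With `v = S ψ` we have `ψ = (H - z̄)(H - z) v`, so `⟨ψ, S ψ⟩ = ‖(H - z) v‖²` and
`⟨ψ, R² ψ⟩ = ⟨(H - z) v, (H - z̄) v⟩`. Writing `H - z = (H - Re z) - i Im z` and
`y = (H - Re z) v`, these are `‖y‖² + (Im z)² ‖v‖²` and (in real part)
`‖y‖² - (Im z)² ‖v‖²`. Since `v ⊥ Φ`, the gap gives `⟨v, H v⟩ ≥ (E + g) ‖v‖²`, hence
`‖y‖ ≥ (g - μ) ‖v‖`, while `|Im z| ≤ μ`; so the ratio of the two is at most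
`((g - μ)² + μ²) / ((g - μ)² - μ²)`.
-/

open scoped InnerProductSpace ComplexConjugate
open RCLike

/-- For `t < 1/2` this is the fraction; the `max` only keeps it positive for larger `t`. -/
noncomputable def gapConst (t : ℝ) : ℝ := max 1 (((1 - t) ^ 2 + t ^ 2) / ((1 - t) ^ 2 - t ^ 2))

lemma gapConst_pos (t : ℝ) : 0 < gapConst t :=
  one_pos.trans_le (le_max_left _ _)

lemma div_le_gapConst_div {g μ : ℝ} (hg : 0 < g) :
    ((g - μ) ^ 2 + μ ^ 2) / ((g - μ) ^ 2 - μ ^ 2) ≤ gapConst (μ / g) := by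
  refine le_of_eq_of_le ?_ (le_max_right _ _)
  simp only [one_sub_div hg.ne', div_pow, ← add_div, ← sub_div]
  rw [div_div_div_cancel_right₀ (pow_ne_zero 2 hg.ne')]

lemma sq_add_sq_le_div_mul_sq_sub_sq {a m s t : ℝ} (hm : 0 ≤ m) (hma : m < a) (ht : 0 ≤ t)
    (h : a * t ≤ m * s) :
    s ^ 2 + t ^ 2 ≤ (a ^ 2 + m ^ 2) / (a ^ 2 - m ^ 2) * (s ^ 2 - t ^ 2) := by
  rw [div_mul_eq_mul_div, le_div_iff₀ (by nlinarith)]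
  nlinarith [mul_self_le_mul_self (mul_nonneg (hm.trans hma.le) ht) h]

lemma commute_sub_smul_one {𝕜 R : Type*} [CommRing 𝕜] [Ring R] [Algebra 𝕜 R] (x : R)
    (a b : 𝕜) : Commute (x - a • 1) (x - b • 1) :=
  ((Commute.refl x).sub_right ((Commute.one_right x).smul_right b)).sub_left
    ((Commute.one_left _).smul_left a)

lemma forall_mem_spectrum_real_of_complex {R : Type*} [Ring R] [Algebra ℂ R] [Algebra ℝ R]
    [IsScalarTower ℝ ℂ R] {a : R} {E g : ℝ}
    (h : ∀ w ∈ spectrum ℂ a, w = E ∨ ∃ x : ℝ, w = x ∧ E + g ≤ x) :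
    ∀ x ∈ spectrum ℝ a, x = E ∨ E + g ≤ x := fun x hx => by
  rcases h x (spectrum.algebraMap_mem ℂ hx) with h | ⟨y, hy, hle⟩
  · exact .inl (by exact_mod_cast h)
  · exact .inr (by rwa [show x = y by exact_mod_cast hy])

variable {F : Type*} [NormedAddCommGroup F] [InnerProductSpace ℂ F]

lemma re_inner_sub_add (x y : F) : re ⟪x - y, x + y⟫_ℂ = ‖x‖ ^ 2 - ‖y‖ ^ 2 := by
  rw [inner_sub_left, inner_add_right, inner_add_right]
  simp only [map_add, map_sub, inner_re_symm (𝕜 := ℂ) y x, inner_self_eq_norm_sq]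
  ring

lemma sub_smul_eq_sub_re_smul_sub_im_smul (x v : F) (z : ℂ) :
    x - z • v = (x - (z.re : ℂ) • v) - ((z.im : ℂ) * Complex.I) • v := by
  conv_lhs => rw [← Complex.re_add_im z]
  rw [add_smul]
  abel

lemma norm_sub_smul_sq {x v : F} (hxv : im ⟪x, v⟫_ℂ = 0) (z : ℂ) :
    ‖x - z • v‖ ^ 2 = ‖x - (z.re : ℂ) • v‖ ^ 2 + z.im ^ 2 * ‖v‖ ^ 2 := by
  have hre : re ⟪x - (z.re : ℂ) • v, ((z.im : ℂ) * Complex.I) • v⟫_ℂ = 0 := by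
    simp [inner_self_eq_norm_sq_to_K, ← Complex.ofReal_pow,
      show (⟪x, v⟫_ℂ).im = 0 from hxv]
  rw [sub_smul_eq_sub_re_smul_sub_im_smul, @norm_sub_sq ℂ, hre, norm_smul]
  simp [mul_pow]

lemma re_inner_sub_smul_sub_conj_smul (x v : F) (z : ℂ) :
    re ⟪x - z • v, x - conj z • v⟫_ℂ = ‖x - (z.re : ℂ) • v‖ ^ 2 - z.im ^ 2 * ‖v‖ ^ 2 := by
  rw [sub_smul_eq_sub_re_smul_sub_im_smul x v z,
    sub_smul_eq_sub_re_smul_sub_im_smul x v (conj z)]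
  simp only [Complex.conj_re, Complex.conj_im, Complex.ofReal_neg, neg_mul, neg_smul,
    sub_neg_eq_add]
  rw [re_inner_sub_add, norm_smul]
  simp [mul_pow]

lemma sub_mul_norm_le_norm_sub_smul {x v : F} {c : ℝ} (h : c * ‖v‖ ^ 2 ≤ re ⟪x, v⟫_ℂ)
    (r : ℝ) : (c - r) * ‖v‖ ≤ ‖x - (r : ℂ) • v‖ := by
  rcases (norm_nonneg v).eq_or_lt with hv | hv
  · rw [← hv, mul_zero]
    exact norm_nonneg _
  have hre : re ⟪x - (r : ℂ) • v, v⟫_ℂ = re ⟪x, v⟫_ℂ - r * ‖v‖ ^ 2 := by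
    simp [inner_self_eq_norm_sq_to_K, ← Complex.ofReal_pow]
  refine le_of_mul_le_mul_right ?_ hv
  calc (c - r) * ‖v‖ * ‖v‖ ≤ re ⟪x - (r : ℂ) • v, v⟫_ℂ := by nlinarith
    _ ≤ ‖x - (r : ℂ) • v‖ * ‖v‖ := re_inner_le_norm _ v

variable [CompleteSpace F]

lemma IsSelfAdjoint.star_sub_smul_one {H : F →L[ℂ] F} (hH : IsSelfAdjoint H) (z : ℂ) :
    star (H - z • 1) = H - conj z • 1 := by
  simp [star_sub, star_smul, hH.star_eq]

lemma apply_eq_zero_of_mul_eq_smul {H P : F →L[ℂ] F} (hP : IsSelfAdjoint P) {c : ℂ}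
    (hHP : H * P = c • P) {v : F} (hv : ∀ w, H w = c • w → ⟪w, v⟫_ℂ = 0) : P v = 0 := by
  rw [← inner_self_eq_zero (𝕜 := ℂ)]
  calc ⟪P v, P v⟫_ℂ = ⟪P (P v), v⟫_ℂ := (hP.isSymmetric _ _).symm
    _ = 0 := hv _ (by simpa using congr($hHP (P v)))

lemma re_inner_apply_ge_of_spectrum_gap {H : F →L[ℂ] F} (hH : IsSelfAdjoint H) {E g : ℝ}
    (hg : 0 < g) (hspec : ∀ x ∈ spectrum ℝ H, x = E ∨ E + g ≤ x) {v : F}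
    (hv : ∀ w, H w = (E : ℂ) • w → ⟪w, v⟫_ℂ = 0) :
    (E + g) * ‖v‖ ^ 2 ≤ re ⟪H v, v⟫_ℂ := by
  -- `P = f(H)` is the spectral projection onto the eigenvalue `E`, and on the spectrum
  -- `t - (E + g) + g f(t) ≥ 0`, i.e. `H - (E + g) + g P ≥ 0`.
  set f : ℝ → ℝ := fun t => max (1 - |t - E| / g) 0
  have hf_gap : ∀ t, E + g ≤ t → f t = 0 := fun t ht => by
    refine max_eq_right (sub_nonpos.2 ((le_div_iff₀ hg).2 ?_))
    rw [one_mul, abs_of_nonneg (by linarith)]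
    linarith
  set P := cfc f H with hP
  have hHP : H * P = (E : ℂ) • P := by
    have h : cfc (fun t => t * f t) H = cfc (fun t => E * f t) H :=
      cfc_congr fun t ht => by
        rcases hspec t ht with rfl | h
        · rfl
        · simp [hf_gap t h]
    rwa [cfc_mul _ _ H, cfc_id' ℝ H, cfc_const_mul E f H, ← Complex.coe_smul] at h
  have hPv : P v = 0 := apply_eq_zero_of_mul_eq_smul (cfc_predicate f H) hHP hv
  have hpos : 0 ≤ cfc (fun t => t - (E + g) + g * f t) H :=
    cfc_nonneg fun t ht => by
      rcases hspec t ht with rfl | h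
      · simp [f]
      · simp only [hf_gap t h, mul_zero, add_zero]
        linarith
  rw [cfc_add H (fun t => t - (E + g)) (fun t => g * f t),
    cfc_sub (fun t => t) (fun _ => E + g) H, cfc_id' ℝ H, cfc_const (E + g) H,
    cfc_const_mul g f H, ← hP] at hpos
  have h := ((ContinuousLinearMap.nonneg_iff_isPositive _).1 hpos).re_inner_nonneg_left v
  simp only [add_apply, sub_apply, hPv, smul_zero, add_zero, Algebra.algebraMap_eq_smul_one,
    smul_apply, one_apply_eq_self, inner_sub_left, map_sub] at h
  have hEg : re ⟪(E + g) • v, v⟫_ℂ = (E + g) * ‖v‖ ^ 2 := by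
    simp [inner_self_eq_norm_sq_to_K, ← Complex.ofReal_pow]
  linarith

lemma norm_sq_le_div_mul_re_inner {H : F →L[ℂ] F} (hH : IsSelfAdjoint H) {E g μ : ℝ} {z : ℂ}
    (hμg : 2 * μ < g) (hz : ‖z - E‖ ≤ μ) {v : F}
    (hgap : (E + g) * ‖v‖ ^ 2 ≤ re ⟪H v, v⟫_ℂ) :
    ‖H v - z • v‖ ^ 2 ≤ ((g - μ) ^ 2 + μ ^ 2) / ((g - μ) ^ 2 - μ ^ 2) *
      re ⟪H v - z • v, H v - conj z • v⟫_ℂ := by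
  have hre : z.re - E ≤ μ := by simpa using (Complex.re_le_norm (z - E)).trans hz
  have him : |z.im| ≤ μ := by simpa using (Complex.abs_im_le_norm (z - E)).trans hz
  have hμ : 0 ≤ μ := (abs_nonneg _).trans him
  have hy := sub_mul_norm_le_norm_sub_smul hgap z.re
  have hHv : im ⟪H v, v⟫_ℂ = 0 := hH.isSymmetric.im_inner_apply_self v
  rw [norm_sub_smul_sq hHv, re_inner_sub_smul_sub_conj_smul, ← sq_abs z.im, ← mul_pow]
  refine sq_add_sq_le_div_mul_sq_sub_sq hμ (by linarith) (by positivity) ?_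
  calc (g - μ) * (|z.im| * ‖v‖) = |z.im| * ((g - μ) * ‖v‖) := by ring
    _ ≤ μ * ((g - μ) * ‖v‖) :=
        mul_le_mul_of_nonneg_right him (mul_nonneg (by linarith) (norm_nonneg v))
    _ ≤ μ * ‖H v - (z.re : ℂ) • v‖ :=
        mul_le_mul_of_nonneg_left
          ((mul_le_mul_of_nonneg_right (by linarith) (norm_nonneg v)).trans hy) hμ

lemma norm_sq_le_gapConst_mul_norm_inner {H : F →L[ℂ] F} (hH : IsSelfAdjoint H) {E g μ : ℝ}
    {z : ℂ} (hg : 0 < g) (hμg : 2 * μ < g) (hz : ‖z - E‖ ≤ μ) {v : F}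
    (hgap : (E + g) * ‖v‖ ^ 2 ≤ re ⟪H v, v⟫_ℂ) :
    ‖H v - z • v‖ ^ 2 ≤ gapConst (μ / g) * ‖⟪H v - z • v, H v - conj z • v⟫_ℂ‖ := by
  have hμ : 0 ≤ μ := (norm_nonneg _).trans hz
  set K := ((g - μ) ^ 2 + μ ^ 2) / ((g - μ) ^ 2 - μ ^ 2)
  set q := ⟪H v - z • v, H v - conj z • v⟫_ℂ
  calc ‖H v - z • v‖ ^ 2 ≤ K * re q := norm_sq_le_div_mul_re_inner hH hμg hz hgap
    _ ≤ K * ‖q‖ :=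
        mul_le_mul_of_nonneg_left (re_le_norm q) (div_nonneg (by positivity) (by nlinarith))
    _ ≤ gapConst (μ / g) * ‖q‖ :=
        mul_le_mul_of_nonneg_right (div_le_gapConst_div hg) (norm_nonneg q)

section Resolvent

variable {A R S : F →L[ℂ] F}

lemma star_mul_self_apply_of_mul_eq_one (hS : star A * A * S = 1) (ψ : F) :
    star A (A (S ψ)) = ψ := by
  simpa using congr($hS ψ)

lemma inner_apply_eq_inner_of_star_mul_self_mul_eq_one (hS : star A * A * S = 1) (ψ : F) :
    ⟪ψ, S ψ⟫_ℂ = ⟪A (S ψ), A (S ψ)⟫_ℂ := by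
  nth_rewrite 1 [← star_mul_self_apply_of_mul_eq_one hS ψ]
  rw [ContinuousLinearMap.star_eq_adjoint, ContinuousLinearMap.adjoint_inner_left]

lemma inner_apply_apply_eq_inner_of_star_mul_self_mul_eq_one (hA : Commute (star A) A)
    (hRA : R * A = 1) (hAR : A * R = 1) (hS : star A * A * S = 1) (ψ : F) :
    ⟪ψ, R (R ψ)⟫_ℂ = ⟪A (S ψ), star A (S ψ)⟫_ℂ := by
  have hψ := star_mul_self_apply_of_mul_eq_one hS ψ
  have hR : Commute R (star A) := hA.symm.units_inv_left (u := ⟨A, R, hAR, hRA⟩)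
  have h₁ : star R ψ = A (S ψ) := by
    conv_lhs => rw [← hψ]
    rw [← mul_apply_eq_comp, ← star_mul, hAR, star_one, one_apply_eq_self]
  have h₂ : R ψ = star A (S ψ) := by
    conv_lhs => rw [← hψ]
    rw [← mul_apply_eq_comp, hR.eq, mul_apply_eq_comp, ← mul_apply_eq_comp R, hRA,
      one_apply_eq_self]
  rw [← h₁, ← h₂, ContinuousLinearMap.star_eq_adjoint,
    ContinuousLinearMap.adjoint_inner_left]

lemma inner_apply_eq_zero_of_star_mul_self_mul_eq_one (hS : star A * A * S = 1) {Φ ψ : F}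
    {c : ℂ} (hc : c ≠ 0) (hAΦ : A Φ = c • Φ) (hA'Φ : star A Φ = conj c • Φ)
    (hψ : ⟪Φ, ψ⟫_ℂ = 0) : ⟪Φ, S ψ⟫_ℂ = 0 := by
  rw [← star_mul_self_apply_of_mul_eq_one hS ψ, ContinuousLinearMap.star_eq_adjoint,
    ContinuousLinearMap.adjoint_inner_right, hAΦ, inner_smul_left,
    ← ContinuousLinearMap.adjoint_inner_left, ← ContinuousLinearMap.star_eq_adjoint, hA'Φ,
    inner_smul_left, Complex.conj_conj] at hψ
  simpa [hc] using hψ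

end Resolvent

/-- property (B5), squared-resolvent analogue of (B3): for `ψ ⊥ Φ` and
`|z - E| = μ < g/3`, `⟨ψ, |H-z|⁻² ψ⟩ ≤ C |⟨ψ, (H-z)⁻² ψ⟩|` with `C` depending only on
`μ/g`. Here `S = |H - z|⁻² = ((H - z̄)(H - z))⁻¹` and `R = (H - z)⁻¹`. -/
theorem stmt3 : ∃ C : ℝ → ℝ, (∀ t, 0 < C t) ∧
    ∀ (F : Type) [NormedAddCommGroup F] [InnerProductSpace ℂ F] [CompleteSpace F]
      (H : F →L[ℂ] F) (E g μ : ℝ) (Φ ψ : F) (z : ℂ),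
      IsSelfAdjoint H → 0 < g →
      ‖Φ‖ = 1 → H Φ = (E : ℂ) • Φ →
      (∀ v : F, H v = (E : ℂ) • v → ∃ c : ℂ, v = c • Φ) →
      (∀ w ∈ spectrum ℂ H, w = (E : ℂ) ∨ ∃ x : ℝ, w = (x : ℂ) ∧ E + g ≤ x) →
      ⟪Φ, ψ⟫_ℂ = 0 →
      0 < μ → μ < g / 3 → ‖z - (E : ℂ)‖ = μ →
      ∀ R S : F →L[ℂ] F,
        R * (H - z • 1) = 1 → (H - z • 1) * R = 1 →
        S * ((H - (starRingEnd ℂ z) • 1) * (H - z • 1)) = 1 →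
        ((H - (starRingEnd ℂ z) • 1) * (H - z • 1)) * S = 1 →
        (⟪ψ, S ψ⟫_ℂ).re ≤ C (μ / g) * ‖⟪ψ, R (R ψ)⟫_ℂ‖ := by
  refine ⟨gapConst, gapConst_pos, ?_⟩
  intro F _ _ _ H E g μ Φ ψ z hH hg _ hEΦ hsimp hspec hperp hμ hμg hz R S hRA hAR _ hS
  have hstar := hH.star_sub_smul_one z
  rw [← hstar] at hS
  have hzE : (E : ℂ) - z ≠ 0 := by
    rw [← norm_pos_iff, norm_sub_rev, hz]
    exact hμ
  have hΦ : ⟪Φ, S ψ⟫_ℂ = 0 :=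
    inner_apply_eq_zero_of_star_mul_self_mul_eq_one hS hzE (by simp [hEΦ, sub_smul])
      (by simp [hstar, hEΦ, sub_smul]) hperp
  have hgap : (E + g) * ‖S ψ‖ ^ 2 ≤ re ⟪H (S ψ), S ψ⟫_ℂ := by
    refine re_inner_apply_ge_of_spectrum_gap hH hg (forall_mem_spectrum_real_of_complex hspec)
      fun w hw => ?_
    obtain ⟨c, rfl⟩ := hsimp w hw
    rw [inner_smul_left, hΦ, mul_zero]
  rw [inner_apply_eq_inner_of_star_mul_self_mul_eq_one hS,
    inner_apply_apply_eq_inner_of_star_mul_self_mul_eq_one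
      (hstar ▸ commute_sub_smul_one H _ z) hRA hAR hS,
    hstar, ← re_to_complex, inner_self_eq_norm_sq]
  simp only [sub_apply, smul_apply, one_apply_eq_self]
  exact norm_sq_le_gapConst_mul_norm_inner hH hg (by linarith) hz.le hgap
end

section
/- Let H be a self-adjoint operator with simple isolated eigenvalue E₀, normalized eigenvector Φ₀, and spectral gap g > 0, and let V be bounded self-adjoint with ‖V‖ < g/4. Let γ be the circle of radius g/2 around E₀. Then P := (-1/(2πi)) ∮_γ (H + V - z)⁻¹ dz is a rank-one orthogonal projection, and the vector Φ := P Φ₀ is nonzero with ‖Φ - Φ₀‖ ≤ C ‖V‖/g for a universal constant C; in particular Φ is an eigenvector of H + V. -/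
/-!
On the circle `γ = C(E₀, g/2)` the spectrum of `H` stays at distance `≥ g/2`, and since
`‖V‖ < g/4` a Neumann series shows that the spectrum of `A = H + V` stays at distance `≥ g/4`.
For a normal operator whose spectrum avoids `γ`, the scalar Cauchy formula
`∮_γ (x - z)⁻¹ dz = -2πi · 𝟙[|x - E₀| < g/2]` passes through the continuous functional
calculus, so the Riesz integral of `A` is `cfc 𝟙_disc A`: an orthogonal projection commuting
with `A`. The same formula for `H` gives the projection `P₀` onto `ℂ Φ₀`, and the second
resolvent identity bounds `‖P - P₀‖ ≤ 4‖V‖/g < 1`. Two idempotents at distance `< 1` have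
ranges of equal dimension, so `P` has rank one; `‖PΦ₀ - Φ₀‖ ≤ ‖P - P₀‖ < 1` makes `PΦ₀ ≠ 0`,
and it then spans the `A`-invariant range of `P`.
-/

open scoped InnerProductSpace

open Metric Complex

theorem ContinuousLinearMap.circleIntegral_apply {E G : Type*} [NormedAddCommGroup E]
    [NormedSpace ℂ E] [NormedAddCommGroup G] [NormedSpace ℂ G] {f : ℂ → E →L[ℂ] G} {c : ℂ} {r : ℝ}
    (hf : CircleIntegrable f c r) (v : E) :
    (∮ z in C(c, r), f z) v = ∮ z in C(c, r), f z v := by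
  rw [circleIntegral, ContinuousLinearMap.intervalIntegral_apply ((circleIntegrable_iff r).1 hf)]
  rfl

namespace RieszProjection

noncomputable def ballIndicator (c : ℂ) (r : ℝ) (x : ℂ) : ℂ :=
  if ‖x - c‖ < r then 1 else 0

section Scalar

variable {c : ℂ} {r : ℝ}

lemma continuousOn_ballIndicator {s : Set ℂ} (hs : Disjoint s (sphere c r)) :
    ContinuousOn (ballIndicator c r) s := by
  refine ContinuousOn.if (fun x hx => ?_) continuousOn_const continuousOn_const
  have hx_sphere : x ∈ sphere c r := mem_sphere_iff_norm.2 <|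
    frontier_lt_subset_eq (continuous_id.sub continuous_const).norm continuous_const hx.2
  exact absurd hx_sphere (Set.disjoint_left.1 hs hx.1)

lemma ballIndicator_mul_self (x : ℂ) :
    ballIndicator c r x * ballIndicator c r x = ballIndicator c r x := by
  unfold ballIndicator; split_ifs <;> simp

lemma star_ballIndicator (x : ℂ) : star (ballIndicator c r x) = ballIndicator c r x := by
  unfold ballIndicator; split_ifs <;> simp

lemma circleIntegral_sub_inv_eq {x : ℂ} (hr : 0 < r) (hx : x ∉ sphere c r) :
    (∮ z in C(c, r), (x - z)⁻¹) = -(2 * Real.pi * I) * ballIndicator c r x := by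
  have hneg : (∮ z in C(c, r), (x - z)⁻¹) = -∮ z in C(c, r), (z - x)⁻¹ := by
    rw [← neg_one_mul, ← circleIntegral.integral_const_mul]
    simp only [neg_one_mul, ← inv_neg, neg_sub]
  rw [hneg, ballIndicator]
  split_ifs with hlt
  · rw [circleIntegral.integral_sub_inv_of_mem_ball (mem_ball_iff_norm.2 hlt), mul_one]
  · have hout : r < ‖x - c‖ := (not_lt.1 hlt).lt_of_ne' (mt mem_sphere_iff_norm.2 hx)
    rw [mul_zero, neg_eq_zero]
    refine DiffContOnCl.circleIntegral_eq_zero hr.le (DifferentiableOn.diffContOnCl ?_)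
    rw [closure_ball c hr.ne']
    refine fun z hz =>
      ((differentiableAt_id.sub_const x).inv (sub_ne_zero.2 ?_)).differentiableWithinAt
    rintro rfl
    exact (mem_closedBall_iff_norm.1 hz).not_gt hout

lemma half_le_norm_sub_of_gap {s : Set ℂ} {g : ℝ} (hgap : ∀ w ∈ s, w ≠ c → g ≤ ‖w - c‖) :
    ∀ x ∈ s, ∀ z ∈ sphere c (g / 2), g / 2 ≤ ‖x - z‖ := by
  intro x hx z hz
  rw [mem_sphere_iff_norm] at hz
  rcases eq_or_ne x c with rfl | hne
  · rw [norm_sub_rev, hz]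
  · have htri : ‖x - c‖ - ‖z - c‖ ≤ ‖x - z‖ := by
      simpa using norm_sub_norm_le (x - c) (z - c)
    linarith [hgap x hx hne]

omit c r in
lemma disjoint_of_le_norm_sub {s t : Set ℂ} {d : ℝ} (hd : 0 < d)
    (hsep : ∀ x ∈ s, ∀ z ∈ t, d ≤ ‖x - z‖) : Disjoint s t :=
  Set.disjoint_left.2 fun x hx hxt => by simpa [hd.not_ge] using hsep x hx x hxt

end Scalar

section CStarAlgebra

variable {A : Type*} [CStarAlgebra A] {a : A} {z : ℂ}

/-- `(a - z)⁻¹`, built through the functional calculus so that circle integrals in `z` can be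
moved inside `cfc`. -/
noncomputable def cfcRes (a : A) (z : ℂ) : A :=
  cfc (fun x : ℂ => (x - z)⁻¹) a

lemma continuousOn_sub_inv {s : Set ℂ} (hz : z ∉ s) :
    ContinuousOn (fun x : ℂ => (x - z)⁻¹) s :=
  (continuousOn_id.sub continuousOn_const).inv₀ fun x hx => sub_ne_zero.2 <| by
    rintro rfl; exact hz hx

lemma cfc_sub_const (a : A) [IsStarNormal a] (z : ℂ) :
    cfc (fun x : ℂ => x - z) a = a - z • 1 := by
  rw [cfc_sub (fun x : ℂ => x) (fun _ => z) a, cfc_id' ℂ a, cfc_const z a,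
    Algebra.algebraMap_eq_smul_one]

lemma cfcRes_mul_sub [IsStarNormal a] (hz : z ∉ spectrum ℂ a) :
    cfcRes a z * (a - z • 1) = 1 := by
  rw [cfcRes, ← cfc_sub_const, ← cfc_mul _ _ a (continuousOn_sub_inv hz) (by fun_prop),
    ← cfc_const_one ℂ a]
  refine cfc_congr fun x hx => inv_mul_cancel₀ (sub_ne_zero.2 ?_)
  rintro rfl; exact hz hx

lemma sub_mul_cfcRes [IsStarNormal a] (hz : z ∉ spectrum ℂ a) :
    (a - z • 1) * cfcRes a z = 1 := by
  rw [cfcRes, ← cfc_sub_const, ← cfc_mul _ _ a (by fun_prop) (continuousOn_sub_inv hz),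
    ← cfc_const_one ℂ a]
  refine cfc_congr fun x hx => mul_inv_cancel₀ (sub_ne_zero.2 ?_)
  rintro rfl; exact hz hx

lemma eq_cfcRes_of_mul_sub_eq_one [IsStarNormal a] (hz : z ∉ spectrum ℂ a) {R : A}
    (hR : R * (a - z • 1) = 1) : R = cfcRes a z := by
  rw [← mul_one R, ← sub_mul_cfcRes hz, ← mul_assoc, hR, one_mul]

lemma norm_cfcRes_le {d : ℝ} (hd : 0 < d) (h : ∀ x ∈ spectrum ℂ a, d ≤ ‖x - z‖) :
    ‖cfcRes a z‖ ≤ d⁻¹ :=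
  norm_cfc_le (inv_nonneg.2 hd.le) fun x hx => by
    rw [norm_inv]; exact inv_anti₀ hd (h x hx)

lemma cfcRes_sub_cfcRes {b : A} [IsStarNormal a] [IsStarNormal b] (ha : z ∉ spectrum ℂ a)
    (hb : z ∉ spectrum ℂ b) : cfcRes b z - cfcRes a z = cfcRes b z * (a - b) * cfcRes a z := by
  rw [show a - b = (a - z • 1) - (b - z • 1) by abel, mul_sub, sub_mul, mul_assoc,
    sub_mul_cfcRes ha, mul_one, cfcRes_mul_sub hb, one_mul]

lemma notMem_spectrum_add [IsStarNormal a] (b : A) {d : ℝ} (hd : 0 < d)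
    (h : ∀ x ∈ spectrum ℂ a, d ≤ ‖x - z‖) (hb : ‖b‖ < d) : z ∉ spectrum ℂ (a + b) := by
  have hz : z ∉ spectrum ℂ a := fun hz => by simpa [hd.not_ge] using h z hz
  have hsmall : ‖-(cfcRes a z * b)‖ < 1 := calc
    ‖-(cfcRes a z * b)‖ ≤ ‖cfcRes a z‖ * ‖b‖ := by rw [norm_neg]; exact norm_mul_le _ _
    _ ≤ d⁻¹ * ‖b‖ := by gcongr; exact norm_cfcRes_le hd h
    _ < d⁻¹ * d := by gcongr
    _ = 1 := inv_mul_cancel₀ hd.ne'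
  have hfactor : a + b - z • 1 = (a - z • 1) * (1 - -(cfcRes a z * b)) := by
    rw [sub_neg_eq_add, mul_add, mul_one, ← mul_assoc, sub_mul_cfcRes hz, one_mul]
    abel
  have hunit : IsUnit (a - z • 1) := ⟨⟨_, _, sub_mul_cfcRes hz, cfcRes_mul_sub hz⟩, rfl⟩
  rw [spectrum.notMem_iff, Algebra.algebraMap_eq_smul_one, ← neg_sub, hfactor]
  exact (hunit.mul (isUnit_one_sub_of_norm_lt_one hsmall)).neg

lemma le_norm_sub_of_mem_spectrum_add [IsStarNormal a] (b : A) {D d : ℝ}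
    (hD : ∀ y ∈ spectrum ℂ a, D ≤ ‖y - z‖) (hb : ‖b‖ < D - d) :
    ∀ x ∈ spectrum ℂ (a + b), d ≤ ‖x - z‖ := by
  intro x hx
  by_contra! hxz
  refine notMem_spectrum_add b (d := D - ‖x - z‖) (by linarith [norm_nonneg b])
    (fun y hy => ?_) (by linarith) hx
  have htri : ‖y - z‖ - ‖x - z‖ ≤ ‖y - x‖ := by
    simpa using norm_sub_norm_le (y - z) (x - z)
  linarith [hD y hy]

variable {c : ℂ} {r d : ℝ}

lemma continuousOn_circleKernel (hr : 0 < r) (hd : 0 < d)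
    (hsep : ∀ x ∈ spectrum ℂ a, ∀ z ∈ sphere c r, d ≤ ‖x - z‖) :
    ContinuousOn (Function.uncurry fun (θ : ℝ) (x : ℂ) =>
      deriv (circleMap c r) θ * (x - circleMap c r θ)⁻¹) (Set.univ ×ˢ spectrum ℂ a) := by
  simp only [deriv_circleMap]
  refine ContinuousOn.mul (by fun_prop) (ContinuousOn.inv₀ (by fun_prop) ?_)
  rintro ⟨θ, x⟩ ⟨-, hx⟩ h0
  have := hsep x hx _ (circleMap_mem_sphere c hr.le θ)
  rw [show x - circleMap c r θ = 0 from h0, norm_zero] at this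
  linarith

lemma norm_circleKernel_le (hr : 0 < r) (hd : 0 < d)
    (hsep : ∀ x ∈ spectrum ℂ a, ∀ z ∈ sphere c r, d ≤ ‖x - z‖) (θ : ℝ) :
    ∀ x ∈ spectrum ℂ a, ‖deriv (circleMap c r) θ * (x - circleMap c r θ)⁻¹‖ ≤ r * d⁻¹ := by
  intro x hx
  rw [norm_mul, deriv_circleMap, norm_mul, norm_circleMap_zero, norm_I, mul_one, abs_of_pos hr,
    norm_inv]
  gcongr
  exact hsep x hx _ (circleMap_mem_sphere c hr.le θ)

lemma deriv_circleMap_smul_cfcRes (hr : 0 < r) (hd : 0 < d)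
    (hsep : ∀ x ∈ spectrum ℂ a, ∀ z ∈ sphere c r, d ≤ ‖x - z‖) (θ : ℝ) :
    deriv (circleMap c r) θ • cfcRes a (circleMap c r θ) =
      cfc (fun x => deriv (circleMap c r) θ * (x - circleMap c r θ)⁻¹) a :=
  (cfc_const_mul _ _ a <| continuousOn_sub_inv <| Set.disjoint_right.1
    (disjoint_of_le_norm_sub hd hsep) (circleMap_mem_sphere c hr.le θ)).symm

lemma circleIntegrable_cfcRes [IsStarNormal a] (hr : 0 < r) (hd : 0 < d)
    (hsep : ∀ x ∈ spectrum ℂ a, ∀ z ∈ sphere c r, d ≤ ‖x - z‖) :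
    CircleIntegrable (cfcRes a) c r := by
  rw [circleIntegrable_iff, intervalIntegrable_iff_integrableOn_Ioc_of_le (by positivity)]
  simp_rw [deriv_circleMap_smul_cfcRes hr hd hsep]
  exact integrableOn_cfc measurableSet_Ioc _ (fun _ => r * d⁻¹) a
    (continuousOn_circleKernel hr hd hsep |>.mono (Set.prod_mono (Set.subset_univ _) le_rfl))
    (.of_forall fun θ => norm_circleKernel_le hr hd hsep θ)
    (MeasureTheory.integrableOn_const measure_Ioc_lt_top.ne).hasFiniteIntegral

lemma circleIntegral_cfcRes [IsStarNormal a] (hr : 0 < r) (hd : 0 < d)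
    (hsep : ∀ x ∈ spectrum ℂ a, ∀ z ∈ sphere c r, d ≤ ‖x - z‖) :
    (∮ z in C(c, r), cfcRes a z) = -(2 * Real.pi * I) • cfc (ballIndicator c r) a := by
  have h2π : (0 : ℝ) ≤ 2 * Real.pi := by positivity
  have hdisj := disjoint_of_le_norm_sub hd hsep
  rw [circleIntegral, intervalIntegral.integral_of_le h2π]
  simp_rw [deriv_circleMap_smul_cfcRes hr hd hsep]
  rw [← cfc_setIntegral measurableSet_Ioc _ (fun _ => r * d⁻¹) a
    (continuousOn_circleKernel hr hd hsep |>.mono (Set.prod_mono (Set.subset_univ _) le_rfl))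
    (.of_forall fun θ => norm_circleKernel_le hr hd hsep θ)
    (MeasureTheory.integrableOn_const measure_Ioc_lt_top.ne).hasFiniteIntegral,
    ← cfc_const_mul _ _ a (continuousOn_ballIndicator hdisj)]
  refine cfc_congr fun x hx => ?_
  rw [← circleIntegral_sub_inv_eq hr (Set.disjoint_left.1 hdisj hx), circleIntegral,
    intervalIntegral.integral_of_le h2π]
  rfl

theorem cfc_ballIndicator_eq_circleIntegral [IsStarNormal a] (hr : 0 < r) (hd : 0 < d)
    (hsep : ∀ x ∈ spectrum ℂ a, ∀ z ∈ sphere c r, d ≤ ‖x - z‖) :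
    cfc (ballIndicator c r) a = (-(2 * Real.pi * I)⁻¹ : ℂ) • ∮ z in C(c, r), cfcRes a z := by
  rw [circleIntegral_cfcRes hr hd hsep, smul_smul, neg_mul_neg,
    inv_mul_cancel₀ (by simp [Real.pi_ne_zero]), one_smul]

theorem cfc_ballIndicator_eq_circleIntegral_of_mul_sub_eq_one [IsStarNormal a] (hr : 0 < r)
    (hd : 0 < d) (hsep : ∀ x ∈ spectrum ℂ a, ∀ z ∈ sphere c r, d ≤ ‖x - z‖) {R : ℂ → A}
    (hR : ∀ z ∈ sphere c r, R z * (a - z • 1) = 1) :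
    cfc (ballIndicator c r) a = (-(2 * Real.pi * I)⁻¹ : ℂ) • ∮ z in C(c, r), R z := by
  rw [cfc_ballIndicator_eq_circleIntegral hr hd hsep]
  refine congrArg _ (circleIntegral.integral_congr hr.le fun z hz => ?_)
  exact (eq_cfcRes_of_mul_sub_eq_one
    (Set.disjoint_right.1 (disjoint_of_le_norm_sub hd hsep) hz) (hR z hz)).symm

lemma cfc_ballIndicator_mul_self (hs : Disjoint (spectrum ℂ a) (sphere c r)) :
    cfc (ballIndicator c r) a * cfc (ballIndicator c r) a = cfc (ballIndicator c r) a := by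
  have hχ := continuousOn_ballIndicator hs
  rw [← cfc_mul _ _ a hχ hχ]
  simp_rw [ballIndicator_mul_self]

lemma isSelfAdjoint_cfc_ballIndicator : IsSelfAdjoint (cfc (ballIndicator c r) a) := by
  rw [IsSelfAdjoint, ← cfc_star]
  simp_rw [star_ballIndicator]

lemma mul_cfc_eq_smul_cfc [IsStarNormal a] {f : ℂ → ℂ} {μ : ℂ} (hf : ContinuousOn f (spectrum ℂ a))
    (hvanish : ∀ x ∈ spectrum ℂ a, x ≠ μ → f x = 0) : a * cfc f a = μ • cfc f a := by
  nth_rw 1 [← cfc_id' ℂ a]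
  rw [← cfc_mul _ _ a (by fun_prop) hf, ← cfc_const_mul _ _ a hf]
  refine cfc_congr fun x hx => ?_
  rcases eq_or_ne x μ with rfl | hne
  · rfl
  · simp [hvanish x hx hne]

theorem norm_cfc_ballIndicator_sub_le {b : A} [IsStarNormal a] [IsStarNormal b] {d' : ℝ}
    (hr : 0 < r) (hd : 0 < d) (hd' : 0 < d')
    (hsep : ∀ x ∈ spectrum ℂ a, ∀ z ∈ sphere c r, d ≤ ‖x - z‖)
    (hsep' : ∀ x ∈ spectrum ℂ b, ∀ z ∈ sphere c r, d' ≤ ‖x - z‖) :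
    ‖cfc (ballIndicator c r) b - cfc (ballIndicator c r) a‖ ≤ r * ‖b - a‖ / (d * d') := by
  have hres : ∀ z ∈ sphere c r, ‖cfcRes b z - cfcRes a z‖ ≤ ‖b - a‖ / (d * d') := by
    intro z hz
    rw [cfcRes_sub_cfcRes (Set.disjoint_right.1 (disjoint_of_le_norm_sub hd hsep) hz)
      (Set.disjoint_right.1 (disjoint_of_le_norm_sub hd' hsep') hz)]
    calc ‖cfcRes b z * (a - b) * cfcRes a z‖
        ≤ ‖cfcRes b z‖ * ‖a - b‖ * ‖cfcRes a z‖ := norm_mul₃_le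
      _ ≤ d'⁻¹ * ‖a - b‖ * d⁻¹ := by
        gcongr
        · exact norm_cfcRes_le hd' fun x hx => hsep' x hx z hz
        · exact norm_cfcRes_le hd fun x hx => hsep x hx z hz
      _ = ‖b - a‖ / (d * d') := by rw [norm_sub_rev]; field_simp
  have hint : ‖∮ z in C(c, r), (cfcRes b z - cfcRes a z)‖ ≤
      2 * Real.pi * r * (‖b - a‖ / (d * d')) :=
    circleIntegral.norm_integral_le_of_norm_le_const hr.le hres
  rw [cfc_ballIndicator_eq_circleIntegral hr hd' hsep',
    cfc_ballIndicator_eq_circleIntegral hr hd hsep, ← smul_sub,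
    ← circleIntegral.integral_sub (circleIntegrable_cfcRes hr hd' hsep')
      (circleIntegrable_cfcRes hr hd hsep), norm_smul]
  have hnorm : ‖(-(2 * Real.pi * I)⁻¹ : ℂ)‖ = (2 * Real.pi)⁻¹ := by
    simp [abs_of_pos Real.pi_pos]
  calc ‖(-(2 * Real.pi * I)⁻¹ : ℂ)‖ * ‖∮ z in C(c, r), (cfcRes b z - cfcRes a z)‖
      ≤ (2 * Real.pi)⁻¹ * (2 * Real.pi * r * (‖b - a‖ / (d * d'))) := by
        rw [hnorm]; exact mul_le_mul_of_nonneg_left hint (by positivity)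
    _ = r * ‖b - a‖ / (d * d') := by field_simp

end CStarAlgebra

section Operator

variable {𝕜 E : Type*} [NontriviallyNormedField 𝕜] [NormedAddCommGroup E] [NormedSpace 𝕜 E]

lemma injective_restrict_range_of_norm_sub_lt_one {P Q : E →L[𝕜] E} (hP : IsIdempotentElem P)
    (h : ‖P - Q‖ < 1) :
    Function.Injective ((Q : E →ₗ[𝕜] E).restrict (p := LinearMap.range (P : E →ₗ[𝕜] E))
      (q := LinearMap.range (Q : E →ₗ[𝕜] E)) fun u _ => LinearMap.mem_range_self _ u) := by
  refine (injective_iff_map_eq_zero _).2 fun ⟨u, y, hy⟩ hQu => ?_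
  have hQu : Q u = 0 := congrArg Subtype.val hQu
  have hPu : P u = u := by
    rw [← hy]; exact congr($hP y)
  have hle : ‖u‖ ≤ ‖P - Q‖ * ‖u‖ := by
    simpa [hPu, hQu] using (P - Q).le_opNorm u
  have hu : ‖u‖ = 0 := by nlinarith [norm_nonneg u]
  exact Subtype.ext (norm_eq_zero.1 hu)

lemma finrank_range_eq_of_norm_sub_lt_one {P Q : E →L[𝕜] E} (hP : IsIdempotentElem P)
    (hQ : IsIdempotentElem Q) (h : ‖P - Q‖ < 1)
    [FiniteDimensional 𝕜 (LinearMap.range (Q : E →ₗ[𝕜] E))] :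
    Module.finrank 𝕜 (LinearMap.range (P : E →ₗ[𝕜] E)) =
      Module.finrank 𝕜 (LinearMap.range (Q : E →ₗ[𝕜] E)) := by
  have hPQ := injective_restrict_range_of_norm_sub_lt_one hP h
  have hQP := injective_restrict_range_of_norm_sub_lt_one hQ (by rwa [norm_sub_rev])
  have := FiniteDimensional.of_injective _ hPQ
  exact (LinearMap.finrank_le_finrank_of_injective hPQ).antisymm
    (LinearMap.finrank_le_finrank_of_injective hQP)

lemma finrank_range_eq_one_of_forall_eq_smul {P : E →L[𝕜] E} {v : E} (hv : v ≠ 0)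
    (hPv : P v = v) (hrange : ∀ w, ∃ c : 𝕜, P w = c • v) :
    Module.finrank 𝕜 (LinearMap.range (P : E →ₗ[𝕜] E)) = 1 := by
  have hspan : LinearMap.range (P : E →ₗ[𝕜] E) = Submodule.span 𝕜 {v} := by
    refine le_antisymm ?_ (Submodule.span_le.2 (Set.singleton_subset_iff.2 ⟨v, hPv⟩))
    rintro _ ⟨w, rfl⟩
    obtain ⟨c, hc⟩ := hrange w
    exact Submodule.mem_span_singleton.2 ⟨c, hc.symm⟩
  rw [hspan, finrank_span_singleton hv]

lemma exists_apply_eq_smul_of_finrank_range_eq_one {P T : E →L[𝕜] E} (hcomm : Commute T P)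
    (hrank : Module.finrank 𝕜 (LinearMap.range (P : E →ₗ[𝕜] E)) = 1) {v : E} (hv : P v ≠ 0) :
    ∃ e : 𝕜, T (P v) = e • P v := by
  have hPv : (⟨P v, v, rfl⟩ : LinearMap.range (P : E →ₗ[𝕜] E)) ≠ 0 :=
    fun h => hv (congrArg Subtype.val h)
  obtain ⟨e, he⟩ := (finrank_eq_one_iff_of_nonzero' _ hPv).1 hrank ⟨P (T v), T v, rfl⟩
  refine ⟨e, ?_⟩
  rw [show T (P v) = P (T v) from DFunLike.congr_fun hcomm.eq v]
  exact (congrArg Subtype.val he).symm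

lemma norm_apply_sub_le_of_apply_eq_self {P Q : E →L[𝕜] E} {v : E} (hv : Q v = v) :
    ‖P v - v‖ ≤ ‖P - Q‖ * ‖v‖ := by
  simpa [sub_apply, hv] using (P - Q).le_opNorm v

end Operator

section Hilbert

variable {F : Type*} [NormedAddCommGroup F] [InnerProductSpace ℂ F] [CompleteSpace F]

theorem cfc_ballIndicator_apply_of_eigen {T : F →L[ℂ] F} [IsStarNormal T] {c : ℂ} {r d : ℝ}
    (hr : 0 < r) (hd : 0 < d) (hsep : ∀ x ∈ spectrum ℂ T, ∀ z ∈ sphere c r, d ≤ ‖x - z‖)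
    {μ : ℂ} {v : F} (hv : T v = μ • v) (hμ : μ ∉ sphere c r) :
    cfc (ballIndicator c r) T v = ballIndicator c r μ • v := by
  have hres : Set.EqOn (fun z => cfcRes T z v) (fun z => (μ - z)⁻¹ • v) (sphere c r) := by
    intro z hz
    have hμz : μ - z ≠ 0 := sub_ne_zero.2 fun h => hμ (h ▸ hz)
    have hpre : (T - z • 1) ((μ - z)⁻¹ • v) = v := by
      rw [map_smul, sub_apply, hv, smul_apply, one_apply_eq_self, ← sub_smul, smul_smul,
        inv_mul_cancel₀ hμz, one_smul]
    calc cfcRes T z v = cfcRes T z ((T - z • 1) ((μ - z)⁻¹ • v)) := by rw [hpre]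
      _ = (μ - z)⁻¹ • v := by
        rw [← mul_apply_eq_comp,
          cfcRes_mul_sub (Set.disjoint_right.1 (disjoint_of_le_norm_sub hd hsep) hz),
          one_apply_eq_self]
  rw [cfc_ballIndicator_eq_circleIntegral hr hd hsep, smul_apply,
    ContinuousLinearMap.circleIntegral_apply (circleIntegrable_cfcRes hr hd hsep),
    circleIntegral.integral_congr hr.le hres, circleIntegral.integral_smul_const,
    circleIntegral_sub_inv_eq hr hμ, smul_smul, ← mul_assoc, neg_mul_neg,
    inv_mul_cancel₀ (by simp [Real.pi_ne_zero]), one_mul]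

theorem cfc_ballIndicator_of_isolated_simple {H : F →L[ℂ] F} [IsStarNormal H] {E₀ : ℂ} {g : ℝ}
    {Φ₀ : F} (hg : 0 < g) (hΦ₀ : Φ₀ ≠ 0) (hHΦ₀ : H Φ₀ = E₀ • Φ₀)
    (hsimple : ∀ v : F, H v = E₀ • v → ∃ c : ℂ, v = c • Φ₀)
    (hgap : ∀ w ∈ spectrum ℂ H, w ≠ E₀ → g ≤ ‖w - E₀‖) :
    cfc (ballIndicator E₀ (g / 2)) H Φ₀ = Φ₀ ∧
      Module.finrank ℂ
        (LinearMap.range ((cfc (ballIndicator E₀ (g / 2)) H : F →L[ℂ] F) : F →ₗ[ℂ] F)) = 1 := by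
  have hg2 : 0 < g / 2 := by positivity
  have hsep := half_le_norm_sub_of_gap hgap
  have hfix : cfc (ballIndicator E₀ (g / 2)) H Φ₀ = Φ₀ := by
    rw [cfc_ballIndicator_apply_of_eigen hg2 hg2 hsep hHΦ₀
      (Set.disjoint_right.1 sphere_disjoint_ball (mem_ball_self hg2))]
    simp [ballIndicator, hg2]
  have hHP : H * cfc (ballIndicator E₀ (g / 2)) H = E₀ • cfc (ballIndicator E₀ (g / 2)) H :=
    mul_cfc_eq_smul_cfc (continuousOn_ballIndicator (disjoint_of_le_norm_sub hg2 hsep))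
      fun x hx hne => if_neg (by linarith [hgap x hx hne])
  exact ⟨hfix, finrank_range_eq_one_of_forall_eq_smul hΦ₀ hfix fun w =>
    hsimple _ (DFunLike.congr_fun hHP w)⟩

end Hilbert

end RieszProjection

open RieszProjection in
/-- Riesz-projection step of iterative analytic perturbation theory.
`H` has a simple isolated eigenvalue `E₀` with gap `g` and normalized eigenvector `Φ₀`;
`V` is a bounded self-adjoint perturbation with `‖V‖ < g/4`.  With `R z = (H + V - z)⁻¹`
on the circle `γ` of radius `g/2` around `E₀`, `P := -(2πi)⁻¹ ∮_γ R z dz` is a rank-one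
orthogonal projection, `Φ := P Φ₀ ≠ 0`, `‖Φ - Φ₀‖ ≤ C‖V‖/g` for a universal constant
`C`, and `Φ` is an eigenvector of `H + V`. -/
theorem stmt8 : ∃ C : ℝ, 0 < C ∧
    ∀ (F : Type) [NormedAddCommGroup F] [InnerProductSpace ℂ F] [CompleteSpace F]
      (H V : F →L[ℂ] F) (E₀ g : ℝ) (Φ₀ : F),
      IsSelfAdjoint H → IsSelfAdjoint V → 0 < g →
      ‖Φ₀‖ = 1 → H Φ₀ = (E₀ : ℂ) • Φ₀ →
      (∀ v : F, H v = (E₀ : ℂ) • v → ∃ c : ℂ, v = c • Φ₀) →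
      (∀ w ∈ spectrum ℂ H, w ≠ (E₀ : ℂ) → g ≤ ‖w - (E₀ : ℂ)‖) →
      ‖V‖ < g / 4 →
      ∀ R : ℂ → (F →L[ℂ] F),
        (∀ z : ℂ, ‖z - (E₀ : ℂ)‖ = g / 2 →
          R z * (H + V - z • 1) = 1 ∧ (H + V - z • 1) * R z = 1) →
        ∀ P : F →L[ℂ] F,
          P = (-(2 * Real.pi * Complex.I)⁻¹ : ℂ) • (∮ z in C((E₀ : ℂ), g / 2), R z) →
          (P * P = P ∧ IsSelfAdjoint P ∧
            Module.finrank ℂ (LinearMap.range (P : F →ₗ[ℂ] F)) = 1) ∧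
          P Φ₀ ≠ 0 ∧ ‖P Φ₀ - Φ₀‖ ≤ C * ‖V‖ / g ∧
          ∃ e : ℂ, (H + V) (P Φ₀) = e • P Φ₀ := by
  refine ⟨4, by norm_num, ?_⟩
  intro F _ _ _ H V E₀ g Φ₀ hH hV hg hΦ₀ hHΦ₀ hsimple hgap hVg R hR P hP
  have := hH.isStarNormal
  have := (hH.add hV).isStarNormal
  have hg2 : 0 < g / 2 := by positivity
  have hsepH := half_le_norm_sub_of_gap hgap
  have hsepA : ∀ x ∈ spectrum ℂ (H + V), ∀ z ∈ sphere (E₀ : ℂ) (g / 2), g / 4 ≤ ‖x - z‖ :=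
    fun x hx z hz => le_norm_sub_of_mem_spectrum_add V (hsepH · · z hz) (by linarith) x hx
  rw [← cfc_ballIndicator_eq_circleIntegral_of_mul_sub_eq_one hg2 (by positivity) hsepA
    fun z hz => (hR z (mem_sphere_iff_norm.1 hz)).1] at hP
  subst hP
  obtain ⟨hP₀Φ₀, hrank₀⟩ := cfc_ballIndicator_of_isolated_simple hg
    (norm_ne_zero_iff.1 (by rw [hΦ₀]; exact one_ne_zero)) hHΦ₀ hsimple hgap
  have hdist : ‖cfc (ballIndicator E₀ (g / 2)) (H + V) - cfc (ballIndicator E₀ (g / 2)) H‖ ≤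
      4 * ‖V‖ / g := by
    refine (norm_cfc_ballIndicator_sub_le hg2 hg2 (by positivity) hsepH hsepA).trans_eq ?_
    rw [add_sub_cancel_left]; field_simp
  have hclose : ‖cfc (ballIndicator E₀ (g / 2)) (H + V) Φ₀ - Φ₀‖ ≤ 4 * ‖V‖ / g :=
    (norm_apply_sub_le_of_apply_eq_self hP₀Φ₀).trans (by rwa [hΦ₀, mul_one])
  have hsmall : 4 * ‖V‖ / g < 1 := by rw [div_lt_one hg]; linarith
  have hne : cfc (ballIndicator E₀ (g / 2)) (H + V) Φ₀ ≠ 0 := fun h => by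
    rw [h, zero_sub, norm_neg, hΦ₀] at hclose
    linarith
  have hidem := cfc_ballIndicator_mul_self (disjoint_of_le_norm_sub (by positivity) hsepA)
  have := Module.finite_of_finrank_eq_succ hrank₀
  have hrank := (finrank_range_eq_of_norm_sub_lt_one hidem
    (cfc_ballIndicator_mul_self (disjoint_of_le_norm_sub hg2 hsepH))
    (hdist.trans_lt hsmall)).trans hrank₀
  exact ⟨⟨hidem, isSelfAdjoint_cfc_ballIndicator, hrank⟩, hne, hclose,
    exists_apply_eq_smul_of_finrank_range_eq_one
      ((Commute.refl _).cfc (star_comm_self' _) _).symm hrank hne⟩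
end

section
/- Let H be self-adjoint, bounded below, with simple lowest eigenvalue E and spectral gap g > 0 above E, and let Φ be the normalized ground state. Suppose ψ ⊥ Φ and that for some M > 0 and all z on the circle |z - E| = μ with 0 < μ < g/3: |⟨ψ, (H - z)⁻² ψ⟩| ≤ M. Then ‖(H - z)⁻¹ ψ‖ ≤ (C M)^{1/2} for all such z, where C depends only on μ/g. -/
/-!
Put `r w = (w - z)⁻¹`, so that `‖(H - z)⁻¹ ψ‖² = ⟪ψ, |r|²(H) ψ⟫` and
`Re ⟪ψ, (H - z)⁻² ψ⟫ = ⟪ψ, (Re r²)(H) ψ⟫`. For `w ≥ E + g` the point `w - z` lies in the cone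
`2 |Im| ≤ Re` because `g > 3μ`, and on that cone `|r|² ≤ 5/3 Re r²`. The eigenvalue `E` is
invisible to `ψ ⊥ ker (H - E)`: subtracting a multiple of a continuous bump at `E`, whose functional
calculus maps into `ker (H - E)`, makes the comparison function nonnegative on all of the spectrum,
and positivity of the functional calculus gives `‖(H - z)⁻¹ ψ‖² ≤ 5/3 |⟪ψ, (H - z)⁻² ψ⟫|`.
-/

open scoped InnerProductSpace ComplexOrder

namespace Complex

lemma sq_norm_le_of_two_abs_im_le_re {u : ℂ} (h : 2 * |u.im| ≤ u.re) :
    ‖u‖ ^ 2 ≤ 5 / 3 * (u ^ 2).re := by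
  rw [← normSq_eq_norm_sq, normSq_apply, sq u, mul_re]
  nlinarith [abs_mul_abs_self u.im, abs_nonneg u.im]

lemma two_abs_im_inv_le_re_inv {v : ℂ} (h : 2 * |v.im| ≤ v.re) :
    2 * |v⁻¹.im| ≤ v⁻¹.re := by
  rw [inv_re, inv_im, abs_div, abs_neg, abs_of_nonneg (normSq_nonneg v), mul_div_assoc']
  exact div_le_div_of_nonneg_right h (normSq_nonneg v)

lemma sq_norm_inv_ofReal_sub_le {z : ℂ} {E μ x : ℝ} (hz : ‖z - E‖ ≤ μ) (hx : E + 3 * μ ≤ x) :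
    ‖((x : ℂ) - z)⁻¹‖ ^ 2 ≤ 5 / 3 * ((((x : ℂ) - z)⁻¹) ^ 2).re := by
  refine sq_norm_le_of_two_abs_im_le_re (two_abs_im_inv_le_re_inv ?_)
  have him : |z.im| ≤ μ := by simpa using (abs_im_le_norm (z - E)).trans hz
  have hre : z.re - E ≤ μ := by simpa using (re_le_norm (z - E)).trans hz
  simp only [sub_re, ofReal_re, sub_im, ofReal_im, zero_sub, abs_neg]
  linarith

end Complex

lemma notMem_spectrum_of_mul_eq_one {R A : Type*} [CommSemiring R] [Ring A] [Algebra R A]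
    {a b : A} {z : R} (h₁ : b * (a - z • 1) = 1) (h₂ : (a - z • 1) * b = 1) :
    z ∉ spectrum R a := by
  rw [spectrum.notMem_iff, Algebra.algebraMap_eq_smul_one, ← neg_sub]
  exact (Units.isUnit ⟨a - z • 1, b, h₂, h₁⟩).neg

section

variable {F : Type*} [NormedAddCommGroup F] [InnerProductSpace ℂ F] [CompleteSpace F]
  {a : F →L[ℂ] F}

lemma re_inner_cfc_apply_nonneg {f : ℂ → ℂ} (hf : ∀ w ∈ spectrum ℂ a, 0 ≤ f w) (x : F) :
    0 ≤ (⟪x, cfc f a x⟫_ℂ).re :=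
  ((ContinuousLinearMap.nonneg_iff_isPositive _).1 (cfc_nonneg hf)).re_inner_nonneg_right x

lemma inner_cfc_sq_norm_apply {f : ℂ → ℂ} (hf : ContinuousOn f (spectrum ℂ a)) (x : F) :
    ⟪x, cfc (fun w ↦ ((‖f w‖ ^ 2 : ℝ) : ℂ)) a x⟫_ℂ = (‖cfc f a x‖ ^ 2 : ℝ) := by
  have h : cfc (fun w ↦ ((‖f w‖ ^ 2 : ℝ) : ℂ)) a = star (cfc f a) * cfc f a := by
    rw [← cfc_star, ← cfc_mul _ f a hf.star hf]
    refine cfc_congr fun w _ ↦ ?_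
    rw [Complex.ofReal_pow, ← Complex.conj_mul']
    rfl
  rw [h, mul_apply_eq_comp, ContinuousLinearMap.star_eq_adjoint,
    ContinuousLinearMap.adjoint_inner_right, inner_self_eq_norm_sq_to_K]
  push_cast
  rfl

lemma re_inner_cfc_re_apply {f : ℂ → ℂ} (hf : ContinuousOn f (spectrum ℂ a)) (x : F) :
    (⟪x, cfc (fun w ↦ ((f w).re : ℂ)) a x⟫_ℂ).re = (⟪x, cfc f a x⟫_ℂ).re := by
  have h : cfc (fun w ↦ ((f w).re : ℂ)) a = (2⁻¹ : ℂ) • (cfc f a + star (cfc f a)) := by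
    rw [← cfc_star, ← cfc_add a f _ hf hf.star,
      ← cfc_const_mul (2⁻¹ : ℂ) (fun w ↦ f w + star (f w)) a (hf.add hf.star)]
    refine cfc_congr fun w _ ↦ ?_
    rw [Complex.re_eq_add_conj, Complex.star_def]
    ring
  have hstar : ⟪x, star (cfc f a) x⟫_ℂ = starRingEnd ℂ ⟪x, cfc f a x⟫_ℂ := by
    rw [ContinuousLinearMap.star_eq_adjoint, ContinuousLinearMap.adjoint_inner_right,
      inner_conj_symm]
  rw [h, smul_apply, add_apply, inner_smul_right, inner_add_right, hstar, Complex.add_conj]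
  simp

variable [IsStarNormal a]

lemma cfc_sub_const_id (c : ℂ) :
    cfc (fun w ↦ w - c) a = a - c • 1 := by
  rw [cfc_sub (fun w ↦ w) (fun _ ↦ c) a, cfc_id' ℂ a, cfc_const c a,
    Algebra.algebraMap_eq_smul_one]

lemma cfc_inv_sub_eq {z : ℂ} {b : F →L[ℂ] F} (h₁ : b * (a - z • 1) = 1)
    (h₂ : (a - z • 1) * b = 1) :
    cfc (fun w ↦ (w - z)⁻¹) a = b := by
  have hz := notMem_spectrum_of_mul_eq_one h₁ h₂
  rw [cfc_inv (fun w ↦ w - z) a fun w hw ↦ sub_ne_zero.2 (ne_of_mem_of_not_mem hw hz),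
    cfc_sub_const_id, ← Units.val_mk (a - z • 1) b h₂ h₁, Ring.inverse_unit]
  rfl

lemma apply_cfc_apply_eq_smul {χ : ℂ → ℂ} {c : ℂ} (hχ : ContinuousOn χ (spectrum ℂ a))
    (hvanish : ∀ w ∈ spectrum ℂ a, w ≠ c → χ w = 0) (x : F) :
    a (cfc χ a x) = c • cfc χ a x := by
  have h : (a - c • 1) * cfc χ a = 0 := by
    rw [← cfc_sub_const_id, ← cfc_mul (fun w ↦ w - c) χ a, ← cfc_zero ℂ a]
    refine cfc_congr fun w hw ↦ ?_
    by_cases hwc : w = c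
    · simp [hwc]
    · simp [hvanish w hw hwc]
  simpa [sub_eq_zero] using congr($h x)

lemma re_inner_cfc_apply_nonneg_of_orthogonal_eigenspace {f : ℂ → ℂ} {c : ℂ} {δ : ℝ}
    (hδ : 0 < δ) (hiso : ∀ w ∈ spectrum ℂ a, w ≠ c → δ ≤ ‖w - c‖)
    (hf : ContinuousOn f (spectrum ℂ a)) (hpos : ∀ w ∈ spectrum ℂ a, w ≠ c → 0 ≤ f w)
    {x : F} (hx : ∀ v, a v = c • v → ⟪v, x⟫_ℂ = 0) :
    0 ≤ (⟪x, cfc f a x⟫_ℂ).re := by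
  set χ : ℂ → ℂ := fun w ↦ ((max 0 (1 - ‖w - c‖ / δ) : ℝ) : ℂ) with hχ_def
  have hχ : Continuous χ := by fun_prop
  have hχ_vanish : ∀ w ∈ spectrum ℂ a, w ≠ c → χ w = 0 := fun w hw hwc ↦ by
    have : 1 - ‖w - c‖ / δ ≤ 0 := by rw [sub_nonpos, one_le_div hδ]; exact hiso w hw hwc
    simp [hχ_def, max_eq_left this]
  have horth : ⟪x, cfc χ a x⟫_ℂ = 0 := by
    rw [← inner_conj_symm, hx _ (apply_cfc_apply_eq_smul hχ.continuousOn hχ_vanish x), map_zero]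
  have hsplit : cfc f a = cfc (fun w ↦ f w - f c * χ w) a + f c • cfc χ a := by
    rw [cfc_sub f (fun w ↦ f c * χ w) a, cfc_const_mul (f c) χ a, sub_add_cancel]
  have hrest : ∀ w ∈ spectrum ℂ a, 0 ≤ f w - f c * χ w := fun w hw ↦ by
    by_cases hwc : w = c
    · simp [hwc, hχ_def]
    · simpa [hχ_vanish w hw hwc] using hpos w hw hwc
  rw [hsplit, add_apply, smul_apply, inner_add_right, inner_smul_right, horth, mul_zero,
    add_zero]
  exact re_inner_cfc_apply_nonneg hrest x

lemma sq_norm_cfc_apply_le_of_orthogonal_eigenspace {f : ℂ → ℂ} {c : ℂ} {δ K : ℝ}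
    (hδ : 0 < δ) (hiso : ∀ w ∈ spectrum ℂ a, w ≠ c → δ ≤ ‖w - c‖)
    (hf : ContinuousOn f (spectrum ℂ a))
    (hK : ∀ w ∈ spectrum ℂ a, w ≠ c → ‖f w‖ ^ 2 ≤ K * (f w ^ 2).re)
    {x : F} (hx : ∀ v, a v = c • v → ⟪v, x⟫_ℂ = 0) :
    ‖cfc f a x‖ ^ 2 ≤ K * (⟪x, cfc f a (cfc f a x)⟫_ℂ).re := by
  have hsq : ContinuousOn (fun w ↦ f w ^ 2) (spectrum ℂ a) := hf.pow 2
  have hre : ContinuousOn (fun w ↦ ((f w ^ 2).re : ℂ)) (spectrum ℂ a) := by fun_prop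
  have hnorm : ContinuousOn (fun w ↦ ((‖f w‖ ^ 2 : ℝ) : ℂ)) (spectrum ℂ a) := by fun_prop
  have hdiff_nonneg : ∀ w ∈ spectrum ℂ a, w ≠ c →
      0 ≤ (K : ℂ) * ((f w ^ 2).re : ℂ) - ((‖f w‖ ^ 2 : ℝ) : ℂ) := fun w hw hwc ↦ by
    rw [← Complex.ofReal_mul, ← Complex.ofReal_sub, Complex.zero_le_real, sub_nonneg]
    exact hK w hw hwc
  have key := re_inner_cfc_apply_nonneg_of_orthogonal_eigenspace
    (f := fun w ↦ (K : ℂ) * ((f w ^ 2).re : ℂ) - ((‖f w‖ ^ 2 : ℝ) : ℂ)) hδ hiso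
    ((continuousOn_const.mul hre).sub hnorm) hdiff_nonneg hx
  rw [cfc_sub (fun w ↦ (K : ℂ) * ((f w ^ 2).re : ℂ)) _ a (continuousOn_const.mul hre) hnorm,
    cfc_const_mul _ _ a hre, sub_apply, smul_apply, inner_sub_right, inner_smul_right,
    inner_cfc_sq_norm_apply hf, Complex.sub_re, Complex.ofReal_re, Complex.re_ofReal_mul,
    re_inner_cfc_re_apply hsq, cfc_pow f 2 a hf, pow_two, mul_apply_eq_comp] at key
  exact sub_nonneg.1 key

end

/-- the inductive bound `|⟨ψ, (H - z)⁻² ψ⟩| ≤ M` on the circle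
`|z - E| = μ < g/3`, for `ψ` orthogonal to the ground state, yields the norm bound
`‖(H - z)⁻¹ ψ‖ ≤ (C M)^{1/2}` with `C` depending only on `μ/g`. -/
theorem stmt14 : ∃ C : ℝ → ℝ, (∀ t, 0 < C t) ∧
    ∀ (F : Type) [NormedAddCommGroup F] [InnerProductSpace ℂ F] [CompleteSpace F]
      (H : F →L[ℂ] F) (E g μ M : ℝ) (Φ ψ : F),
      IsSelfAdjoint H → 0 < g →
      ‖Φ‖ = 1 → H Φ = (E : ℂ) • Φ →
      (∀ v : F, H v = (E : ℂ) • v → ∃ c : ℂ, v = c • Φ) →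
      (∀ w ∈ spectrum ℂ H, w = (E : ℂ) ∨ ∃ x : ℝ, w = (x : ℂ) ∧ E + g ≤ x) →
      (∀ w ∈ spectrum ℂ H, E ≤ w.re) →
      ⟪Φ, ψ⟫_ℂ = 0 →
      0 < μ → μ < g / 3 → 0 < M →
      ∀ R : ℂ → (F →L[ℂ] F),
        (∀ z : ℂ, ‖z - (E : ℂ)‖ = μ →
          R z * (H - z • 1) = 1 ∧ (H - z • 1) * R z = 1) →
        (∀ z : ℂ, ‖z - (E : ℂ)‖ = μ → ‖⟪ψ, R z (R z ψ)⟫_ℂ‖ ≤ M) →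
        ∀ z : ℂ, ‖z - (E : ℂ)‖ = μ → ‖R z ψ‖ ≤ Real.sqrt (C (μ / g) * M) := by
  refine ⟨fun _ ↦ 5 / 3, fun _ ↦ by norm_num, ?_⟩
  intro F _ _ _ H E g μ M Φ ψ hH hg _ _ hsimple hspec _ hΦψ _ hμg _ R hR hbound z hz
  have : IsStarNormal H := hH.isStarNormal
  have hgap : ∀ w ∈ spectrum ℂ H, w ≠ E → ∃ x : ℝ, w = x ∧ E + g ≤ x := fun w hw hwE ↦
    (hspec w hw).resolve_left hwE
  have hiso : ∀ w ∈ spectrum ℂ H, w ≠ E → g ≤ ‖w - E‖ := fun w hw hwE ↦ by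
    obtain ⟨x, rfl, hx⟩ := hgap w hw hwE
    rw [← Complex.ofReal_sub, Complex.norm_real, Real.norm_of_nonneg (by linarith)]
    linarith
  have hcmp : ∀ w ∈ spectrum ℂ H, w ≠ E → ‖(w - z)⁻¹‖ ^ 2 ≤ 5 / 3 * (((w - z)⁻¹) ^ 2).re :=
    fun w hw hwE ↦ by
      obtain ⟨x, rfl, hx⟩ := hgap w hw hwE
      exact Complex.sq_norm_inv_ofReal_sub_le hz.le (by linarith)
  have horth : ∀ v, H v = (E : ℂ) • v → ⟪v, ψ⟫_ℂ = 0 := fun v hv ↦ by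
    obtain ⟨c, rfl⟩ := hsimple v hv
    rw [inner_smul_left, hΦψ, mul_zero]
  have hz_spec := notMem_spectrum_of_mul_eq_one (hR z hz).1 (hR z hz).2
  have hcont : ContinuousOn (fun w ↦ (w - z)⁻¹) (spectrum ℂ H) :=
    ContinuousOn.inv₀ (by fun_prop) fun w hw ↦ sub_ne_zero.2 (ne_of_mem_of_not_mem hw hz_spec)
  have key := sq_norm_cfc_apply_le_of_orthogonal_eigenspace hg hiso hcont hcmp horth
  rw [cfc_inv_sub_eq (hR z hz).1 (hR z hz).2] at key
  refine Real.le_sqrt_of_sq_le (key.trans ?_)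
  gcongr
  exact (Complex.re_le_norm _).trans (hbound z hz)
end
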